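/- arXiv:1208.0804 — 2 statements merged into one kernel-verified Lean document; each statement's English description precedes it below -/
import Mathlib

section
/- Assume: Ψ(r,R) = ψ₃₀r³ + ψ₂₁r²R + ψ₁₂rR² + ψ₀₃R³ + o((|r|+|R|)³) and ∂Ψ/∂r(r,R) = 3ψ₃₀r² + 2ψ₂₁rR + ψ₁₂R² + o((|r|+|R|)²) as (r,R)→(0,0), with ψ₃₀ > 0; Y(r,R) = 1 + y₂₀r² + y₁₁rR + y₀₂R² + o((|r|+|R|)²); Q(r) = q₀r³ + o(r³) and Q'(r) = 3q₀r² + o(r²) as r→0⁺, with q₀ ≠ 0. Define Ψ₁ := Ψ − Q²/(2R), Y₁ := (1 − QQ'/(R·∂Ψ/∂r))·Y, and u₁² := 2Ψ₁/R − 1 + Y₁². Let k ∈ (0,1] be such that D(k) := 3ψ₃₀ + 2kψ₂₁ + k²ψ₁₂ > 0. Then lim_{r→0⁺} (kr)·u₁²(r,kr)/r³ = 2A(k)/D(k), where A(k) := −3q₀² + (k²ψ₁₂ + 2kψ₂₁ + 3ψ₃₀)·(k³ψ₀₃ + k³y₀₂ + k²ψ₁₂ + k²y₁₁ + kψ₂₁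 + ky₂₀ + ψ₃₀). -/
open Filter Topology Asymptotics

/-- The charged velocity function
`u₁²(r,R) = 2Ψ₁/R − 1 + Y₁²`, with `Ψ₁ = Ψ − Q²/(2R)` and
`Y₁ = (1 − QQ'/(R·∂Ψ/∂r))·Y`. -/
noncomputable def u1sq (Ψ Ψr Y : ℝ → ℝ → ℝ) (Q Q' : ℝ → ℝ) (r R : ℝ) : ℝ :=
  2 * (Ψ r R - Q r ^ 2 / (2 * R)) / R - 1
    + ((1 - Q r * Q' r / (R * Ψr r R)) * Y r R) ^ 2

/-- The polynomial `A(k)` of the paper (eq. (4.13)). -/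
def Apoly (ψ30 ψ21 ψ12 ψ03 y20 y11 y02 q0 k : ℝ) : ℝ :=
  -3*q0^2 + (k^2*ψ12 + 2*k*ψ21 + 3*ψ30) *
    (k^3*ψ03 + k^3*y02 + k^2*ψ12 + k^2*y11 + k*ψ21 + k*y20 + ψ30)

/-!
Along the ray `R = k r` the data have normalised limits: `Ψ/r³ → C := ψ₃₀ + kψ₂₁ + k²ψ₁₂ + k³ψ₀₃`,
`∂Ψ/∂r / r² → D(k)`, `(Y − 1)/r² → E := y₂₀ + k y₁₁ + k² y₀₂`, `Q/r³ → q₀`, `Q'/r² → 3q₀`.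
Writing `R·u₁² = 2Ψ − Q²/R + R·(Y₁² − 1)` and dividing by `r³`, the charge term `Q²/(k r⁴)` vanishes,
while `Y₁ = (1 − w)·Y` with `w/r² → 3q₀²/(k D)` gives `(Y₁² − 1)/r² → 2E − 6q₀²/(k D)`.
Hence the limit is `2C + 2kE − 6q₀²/D = 2A(k)/D(k)`.
-/

theorem Asymptotics.IsLittleO.comp_ray {f : ℝ × ℝ → ℝ} {n : ℕ}
    (h : f =o[𝓝 (0, 0)] fun q : ℝ × ℝ => (|q.1| + |q.2|) ^ n) (k : ℝ) :
    (fun r : ℝ => f (r, k * r)) =o[𝓝 0] fun r => r ^ n := by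
  have hray : Tendsto (fun r : ℝ => (r, k * r)) (𝓝 0) (𝓝 (0, 0)) := by
    simpa using ((continuous_id.prodMk (continuous_const.mul continuous_id)).tendsto (0 : ℝ))
  refine (h.comp_tendsto hray).trans_isBigO (isBigO_of_le' (c := (1 + |k|) ^ n) _ fun r => ?_)
  simp only [Function.comp_apply, abs_mul, norm_pow, Real.norm_eq_abs, ← mul_pow]
  rw [abs_of_nonneg (by positivity)]
  exact le_of_eq (by ring)

theorem tendsto_div_of_isLittleO_sub {α : Type*} {l : Filter α} {f φ : α → ℝ} {c : ℝ}
    (h : (fun x => f x - c * φ x) =o[l] φ) (hφ : ∀ᶠ x in l, φ x ≠ 0) :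
    Tendsto (fun x => f x / φ x) l (𝓝 c) := by
  have := h.tendsto_div_nhds_zero.add_const c
  rw [zero_add] at this
  refine this.congr' ?_
  filter_upwards [hφ] with x hx
  field_simp
  ring

theorem tendsto_comp_ray_div_pow {F P : ℝ × ℝ → ℝ} {n : ℕ} {c : ℝ}
    (h : (fun q => F q - P q) =o[𝓝 (0, 0)] fun q : ℝ × ℝ => (|q.1| + |q.2|) ^ n) (k : ℝ)
    (hP : ∀ r, P (r, k * r) = c * r ^ n) :
    Tendsto (fun r => F (r, k * r) / r ^ n) (𝓝[>] 0) (𝓝 c) := by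
  refine tendsto_div_of_isLittleO_sub ?_ (eventually_mem_nhdsWithin.mono fun r hr => ?_)
  · simpa only [hP] using (h.comp_ray k).mono nhdsWithin_le_nhds
  · exact pow_ne_zero n (ne_of_gt hr)

theorem mul_u1sq_eq (Ψ Ψr Y : ℝ → ℝ → ℝ) (Q Q' : ℝ → ℝ) (r : ℝ) {R : ℝ} (hR : R ≠ 0) :
    R * u1sq Ψ Ψr Y Q Q' r R = 2 * Ψ r R - Q r ^ 2 / R
      + R * (((1 - Q r * Q' r / (R * Ψr r R)) * Y r R) ^ 2 - 1) := by
  unfold u1sq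
  field_simp
  ring

theorem tendsto_sq_mul_sub_one_div {α : Type*} {l : Filter α} {y w s : α → ℝ} {E W : ℝ}
    (hs : Tendsto s l (𝓝 0)) (hs0 : ∀ᶠ x in l, s x ≠ 0)
    (hy : Tendsto (fun x => (y x - 1) / s x) l (𝓝 E))
    (hw : Tendsto (fun x => w x / s x) l (𝓝 W)) :
    Tendsto (fun x => (((1 - w x) * y x) ^ 2 - 1) / s x) l (𝓝 (2 * E - 2 * W)) := by
  have hy1 : Tendsto y l (𝓝 1) := by
    have := (hy.mul hs).const_add 1
    rw [mul_zero, add_zero] at this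
    refine this.congr' ?_
    filter_upwards [hs0] with x hx
    field_simp
    ring
  have hw0 : Tendsto w l (𝓝 0) := by
    have := hw.mul hs
    rw [mul_zero] at this
    refine this.congr' ?_
    filter_upwards [hs0] with x hx
    field_simp
  have := (hy.mul (hy1.add_const 1)).sub ((hw.mul (hw0.const_sub 2)).mul (hy1.pow 2))
  convert this.congr' ?_ using 2
  · norm_num
    ring
  · filter_upwards [hs0] with x hx
    field_simp
    ring

theorem ray_limit_u1sq_general
    (Ψ Ψr Y : ℝ → ℝ → ℝ) (Q Q' : ℝ → ℝ)
    (ψ30 ψ21 ψ12 ψ03 y20 y11 y02 q0 : ℝ)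
    (hΨ : (fun q : ℝ × ℝ =>
        Ψ q.1 q.2 - (ψ30*q.1^3 + ψ21*q.1^2*q.2 + ψ12*q.1*q.2^2 + ψ03*q.2^3))
      =o[nhds ((0:ℝ), (0:ℝ))] fun q : ℝ × ℝ => (|q.1| + |q.2|)^3)
    (hΨr : (fun q : ℝ × ℝ =>
        Ψr q.1 q.2 - (3*ψ30*q.1^2 + 2*ψ21*q.1*q.2 + ψ12*q.2^2))
      =o[nhds ((0:ℝ), (0:ℝ))] fun q : ℝ × ℝ => (|q.1| + |q.2|)^2)
    (hY : (fun q : ℝ × ℝ =>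
        Y q.1 q.2 - (1 + y20*q.1^2 + y11*q.1*q.2 + y02*q.2^2))
      =o[nhds ((0:ℝ), (0:ℝ))] fun q : ℝ × ℝ => (|q.1| + |q.2|)^2)
    (hQ : (fun r : ℝ => Q r - q0 * r^3) =o[𝓝[>] (0:ℝ)] fun r : ℝ => r^3)
    (hQ' : (fun r : ℝ => Q' r - 3 * q0 * r^2) =o[𝓝[>] (0:ℝ)] fun r : ℝ => r^2)
    (k : ℝ) (hk : k ∈ Set.Ioc (0:ℝ) 1)
    (hD : 0 < 3*ψ30 + 2*k*ψ21 + k^2*ψ12) :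
    Tendsto (fun r : ℝ => (k*r) * u1sq Ψ Ψr Y Q Q' r (k*r) / r^3)
      (𝓝[>] (0:ℝ))
      (𝓝 (2 * Apoly ψ30 ψ21 ψ12 ψ03 y20 y11 y02 q0 k /
        (3*ψ30 + 2*k*ψ21 + k^2*ψ12))) := by
  obtain ⟨hk0, -⟩ := hk
  set D := 3*ψ30 + 2*k*ψ21 + k^2*ψ12
  have hpos : ∀ᶠ r in 𝓝[>] (0:ℝ), 0 < r := self_mem_nhdsWithin
  have hpow (n : ℕ) : ∀ᶠ r in 𝓝[>] (0:ℝ), r ^ n ≠ 0 := hpos.mono fun r hr => by positivity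
  have hr2 : Tendsto (fun r : ℝ => r ^ 2) (𝓝[>] 0) (𝓝 0) :=
    tendsto_nhdsWithin_of_tendsto_nhds (by simpa using (continuous_pow 2).tendsto (0 : ℝ))
  have hΨk : Tendsto (fun r => Ψ r (k*r) / r^3) (𝓝[>] 0)
      (𝓝 (ψ30 + k*ψ21 + k^2*ψ12 + k^3*ψ03)) := tendsto_comp_ray_div_pow hΨ k fun r => by ring
  have hΨrk : Tendsto (fun r => Ψr r (k*r) / r^2) (𝓝[>] 0) (𝓝 D) :=
    tendsto_comp_ray_div_pow hΨr k fun r => by ring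
  have hYk : Tendsto (fun r => (Y r (k*r) - 1) / r^2) (𝓝[>] 0) (𝓝 (y20 + k*y11 + k^2*y02)) :=
    tendsto_comp_ray_div_pow (F := fun q => Y q.1 q.2 - 1)
      (P := fun q => y20*q.1^2 + y11*q.1*q.2 + y02*q.2^2) (hY.congr_left fun q => by ring) k
      fun r => by ring
  have hQk := tendsto_div_of_isLittleO_sub hQ (hpow 3)
  have hQ'k : Tendsto (fun r => Q' r / r^2) (𝓝[>] 0) (𝓝 (3*q0)) :=
    tendsto_div_of_isLittleO_sub hQ' (hpow 2)
  have hw : Tendsto (fun r => Q r * Q' r / (k*r * Ψr r (k*r)) / r^2) (𝓝[>] 0)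
      (𝓝 (q0 * (3*q0) / (k*D))) :=
    ((hQk.mul hQ'k).div (hΨrk.const_mul k) (by positivity)).congr' <| hpos.mono fun r hr => by
      simp only [Pi.div_apply, div_eq_mul_inv, mul_inv, inv_inv]
      field_simp
  have hlim := ((hΨk.const_mul 2).sub (((hQk.pow 2).mul hr2).div_const k)).add
    ((tendsto_sq_mul_sub_one_div hr2 (hpow 2) hYk hw).const_mul k)
  convert hlim.congr' ?_ using 2
  · rw [Apoly]
    field_simp
    ring
  · filter_upwards [hpos] with r hr
    rw [mul_u1sq_eq _ _ _ _ _ _ (by positivity)]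
    field_simp

/-- Behavior of `R·u₁²` along the rays `R = k r` in the case `p = 1`:
`(kr)·u₁²(r,kr) = (2A(k)/D(k))·r³ + o(r³)` where `D(k) = 3ψ₃₀ + 2kψ₂₁ + k²ψ₁₂`. -/
theorem ray_limit_u1sq
    (Ψ Ψr Y : ℝ → ℝ → ℝ) (Q Q' : ℝ → ℝ)
    (ψ30 ψ21 ψ12 ψ03 y20 y11 y02 q0 : ℝ)
    (hψ30 : 0 < ψ30) (hq0 : q0 ≠ 0)
    (hlink : ∀ r R, HasDerivAt (fun s => Ψ s R) (Ψr r R) r)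
    (hQd : ∀ r, HasDerivAt Q (Q' r) r)
    (hΨ : (fun q : ℝ × ℝ =>
        Ψ q.1 q.2 - (ψ30*q.1^3 + ψ21*q.1^2*q.2 + ψ12*q.1*q.2^2 + ψ03*q.2^3))
      =o[nhds ((0:ℝ), (0:ℝ))] fun q : ℝ × ℝ => (|q.1| + |q.2|)^3)
    (hΨr : (fun q : ℝ × ℝ =>
        Ψr q.1 q.2 - (3*ψ30*q.1^2 + 2*ψ21*q.1*q.2 + ψ12*q.2^2))
      =o[nhds ((0:ℝ), (0:ℝ))] fun q : ℝ × ℝ => (|q.1| + |q.2|)^2)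
    (hY : (fun q : ℝ × ℝ =>
        Y q.1 q.2 - (1 + y20*q.1^2 + y11*q.1*q.2 + y02*q.2^2))
      =o[nhds ((0:ℝ), (0:ℝ))] fun q : ℝ × ℝ => (|q.1| + |q.2|)^2)
    (hQ : (fun r : ℝ => Q r - q0 * r^3) =o[𝓝[>] (0:ℝ)] fun r : ℝ => r^3)
    (hQ' : (fun r : ℝ => Q' r - 3 * q0 * r^2) =o[𝓝[>] (0:ℝ)] fun r : ℝ => r^2)
    (k : ℝ) (hk : k ∈ Set.Ioc (0:ℝ) 1)
    (hD : 0 < 3*ψ30 + 2*k*ψ21 + k^2*ψ12) :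
    Tendsto (fun r : ℝ => (k*r) * u1sq Ψ Ψr Y Q Q' r (k*r) / r^3)
      (𝓝[>] (0:ℝ))
      (𝓝 (2 * Apoly ψ30 ψ21 ψ12 ψ03 y20 y11 y02 q0 k /
        (3*ψ30 + 2*k*ψ21 + k^2*ψ12))) :=
  ray_limit_u1sq_general Ψ Ψr Y Q Q' ψ30 ψ21 ψ12 ψ03 y20 y11 y02 q0 hΨ hΨr hY hQ hQ' k hk hD
end

section
/- Assume: Ψ, ∂Ψ/∂r, Y, Q, Q' are continuous with Ψ(r,R) = ψ₃₀r³ + ψ₂₁r²R + ψ₁₂rR² + ψ₀₃R³ + o((|r|+|R|)³), ∂Ψ/∂r(r,R) = 3ψ₃₀r² + 2ψ₂₁rR + ψ₁₂R² + o((|r|+|R|)²), Y(r,R) = 1 + y₂₀r² + y₁₁rR + y₀₂R² + o((|r|+|R|)²), Q(r) = q₀r³ + o(r³), Q'(r) = 3q₀r² + o(r²), q₀ ≠ 0, ψ₃₀ > 0. Define Ψ₁ := Ψ − Q²/(2R), Y₁ := (1 − QQ'/(R·∂Ψ/∂r))·Y, u₁² := 2Ψ₁/R − 1 + Y₁²,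 A(k) := −3q₀² + (k²ψ₁₂ + 2kψ₂₁ + 3ψ₃₀)·(k³ψ₀₃ + k³y₀₂ + k²ψ₁₂ + k²y₁₁ + kψ₂₁ + ky₂₀ + ψ₃₀), D(k) := 3ψ₃₀ + 2kψ₂₁ + k²ψ₁₂. Suppose there exists k₀ ∈ (0,1) with A(k₀) < 0, A(1) > 0, and D(k) > 0 for all k ∈ [k₀,1], and suppose ∂Ψ/∂r(r,R) > 0 for 0 < R ≤ r small. Then there exists ε > 0 such that for every r ∈ (0,ε) there exists R ∈ (k₀r, r) with u₁²(r,R) = 0. -/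
open Filter Topology Asymptotics

/-!
Along a ray `R = k r` the expansions give `u₁²(r, kr) = 2A(k)/(k D(k)) · r² + o(r²)`. Hence for
small `r` the function `R ↦ u₁²(r, R)` is negative at `R = k₀ r` and positive at `R = r`; it is
continuous on `[k₀ r, r]` because `∂Ψ/∂r > 0` there, and the intermediate value theorem gives the
zero.
-/

theorem tendsto_div_of_isLittleO_sub_const_mul {α : Type*} {l : Filter α} {f g : α → ℝ} {c : ℝ}
    (h : (fun x => f x - c * g x) =o[l] g) (hg : ∀ᶠ x in l, g x ≠ 0) :
    Tendsto (fun x => f x / g x) l (𝓝 c) := by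
  refine (h.tendsto_div_nhds_zero.add_const c).congr' ?_ |>.trans (by rw [zero_add])
  filter_upwards [hg] with x hx
  field_simp
  ring

theorem isLittleO_comp_ray {F : ℝ × ℝ → ℝ} {n : ℕ} (k : ℝ)
    (h : F =o[𝓝 (0, 0)] fun q => (|q.1| + |q.2|) ^ n) :
    (fun r => F (r, k * r)) =o[𝓝 0] fun r => r ^ n := by
  have hray : Tendsto (fun r : ℝ => (r, k * r)) (𝓝 0) (𝓝 (0, 0)) := by
    simpa using ((continuous_id.prodMk (continuous_const.mul continuous_id)).tendsto (0 : ℝ))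
  refine (h.comp_tendsto hray).trans_isBigO (IsBigO.of_bound ((1 + |k|) ^ n) ?_)
  filter_upwards with r
  simp only [Function.comp, norm_pow, Real.norm_eq_abs, abs_mul]
  rw [abs_of_nonneg (by positivity : 0 ≤ |r| + |k| * |r|), ← mul_pow]
  exact le_of_eq (by ring)

theorem tendsto_ray_div_pow {G P : ℝ × ℝ → ℝ} {n : ℕ} {k c : ℝ}
    (h : (fun q => G q - P q) =o[𝓝 (0, 0)] fun q => (|q.1| + |q.2|) ^ n)
    (hP : ∀ r, P (r, k * r) = c * r ^ n) :
    Tendsto (fun r => G (r, k * r) / r ^ n) (𝓝[>] 0) (𝓝 c) := by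
  refine tendsto_div_of_isLittleO_sub_const_mul ?_ ?_
  · simpa only [hP] using (isLittleO_comp_ray k h).mono nhdsWithin_le_nhds
  · filter_upwards [self_mem_nhdsWithin] with r hr using pow_ne_zero n (ne_of_gt hr)

theorem two_mul_Apoly_div_eq (ψ30 ψ21 ψ12 ψ03 y20 y11 y02 q0 : ℝ) {k : ℝ} (hk : k ≠ 0)
    (hD : 3*ψ30 + 2*k*ψ21 + k^2*ψ12 ≠ 0) :
    2 * Apoly ψ30 ψ21 ψ12 ψ03 y20 y11 y02 q0 k / (k * (3*ψ30 + 2*k*ψ21 + k^2*ψ12))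
      = 2 * (ψ30 + ψ21*k + ψ12*k^2 + ψ03*k^3) / k
        + 2 * (y20 + y11*k + y02*k^2 - q0 * (3*q0) / (k * (3*ψ30 + 2*k*ψ21 + k^2*ψ12))) := by
  unfold Apoly
  field_simp
  ring

theorem tendsto_u1sq_ray_div_sq {Ψ Ψr Y : ℝ → ℝ → ℝ} {Q Q' : ℝ → ℝ}
    {ψ30 ψ21 ψ12 ψ03 y20 y11 y02 q0 : ℝ}
    (hΨ : (fun q : ℝ × ℝ =>
        Ψ q.1 q.2 - (ψ30*q.1^3 + ψ21*q.1^2*q.2 + ψ12*q.1*q.2^2 + ψ03*q.2^3))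
      =o[𝓝 (0, 0)] fun q : ℝ × ℝ => (|q.1| + |q.2|)^3)
    (hΨr : (fun q : ℝ × ℝ =>
        Ψr q.1 q.2 - (3*ψ30*q.1^2 + 2*ψ21*q.1*q.2 + ψ12*q.2^2))
      =o[𝓝 (0, 0)] fun q : ℝ × ℝ => (|q.1| + |q.2|)^2)
    (hY : (fun q : ℝ × ℝ =>
        Y q.1 q.2 - (1 + y20*q.1^2 + y11*q.1*q.2 + y02*q.2^2))
      =o[𝓝 (0, 0)] fun q : ℝ × ℝ => (|q.1| + |q.2|)^2)
    (hQ : (fun r : ℝ => Q r - q0 * r^3) =o[𝓝[>] 0] fun r : ℝ => r^3)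
    (hQ' : (fun r : ℝ => Q' r - 3 * q0 * r^2) =o[𝓝[>] 0] fun r : ℝ => r^2)
    {k : ℝ} (hk : k ≠ 0) (hD : 3*ψ30 + 2*k*ψ21 + k^2*ψ12 ≠ 0) :
    Tendsto (fun r => u1sq Ψ Ψr Y Q Q' r (k * r) / r ^ 2) (𝓝[>] 0)
      (𝓝 (2 * Apoly ψ30 ψ21 ψ12 ψ03 y20 y11 y02 q0 k / (k * (3*ψ30 + 2*k*ψ21 + k^2*ψ12)))) := by
  have hr : ∀ᶠ r in 𝓝[>] (0 : ℝ), r ≠ 0 :=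
    eventually_mem_nhdsWithin.mono fun r hr => ne_of_gt hr
  have hr2 : Tendsto (fun r : ℝ => r ^ 2) (𝓝[>] 0) (𝓝 0) :=
    tendsto_nhdsWithin_of_tendsto_nhds (by simpa using (continuous_pow 2).tendsto (0 : ℝ))
  have hq : Tendsto (fun r => Q r / r ^ 3) (𝓝[>] 0) (𝓝 q0) :=
    tendsto_div_of_isLittleO_sub_const_mul hQ (hr.mono fun r hr => pow_ne_zero 3 hr)
  have hq' : Tendsto (fun r => Q' r / r ^ 2) (𝓝[>] 0) (𝓝 (3 * q0)) :=
    tendsto_div_of_isLittleO_sub_const_mul hQ' (hr.mono fun r hr => pow_ne_zero 2 hr)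
  have hp : Tendsto (fun r => Ψ r (k * r) / r ^ 3) (𝓝[>] 0)
      (𝓝 (ψ30 + ψ21*k + ψ12*k^2 + ψ03*k^3)) :=
    tendsto_ray_div_pow (G := fun q => Ψ q.1 q.2) hΨ fun r => by ring
  have hd : Tendsto (fun r => Ψr r (k * r) / r ^ 2) (𝓝[>] 0)
      (𝓝 (3*ψ30 + 2*k*ψ21 + k^2*ψ12)) :=
    tendsto_ray_div_pow (G := fun q => Ψr q.1 q.2) hΨr fun r => by ring
  have hy : Tendsto (fun r => (Y r (k * r) - 1) / r ^ 2) (𝓝[>] 0)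
      (𝓝 (y20 + y11*k + y02*k^2)) :=
    tendsto_ray_div_pow (G := fun q => Y q.1 q.2 - 1)
      (P := fun q => y20*q.1^2 + y11*q.1*q.2 + y02*q.2^2)
      (hY.congr_left fun q => by ring) fun r => by ring
  have hY1 : Tendsto (fun r => Y r (k * r)) (𝓝[>] 0) (𝓝 1) := by
    refine ((hy.mul hr2).add_const 1).congr' ?_ |>.trans (by simp)
    filter_upwards [hr] with r hr
    field_simp
    ring
  set m : ℝ → ℝ := fun r => (Y r (k * r) - 1) / r ^ 2
    - (Q r / r ^ 3) * (Q' r / r ^ 2) * Y r (k * r) / (k * (Ψr r (k * r) / r ^ 2))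
  have hm : Tendsto m (𝓝[>] 0)
      (𝓝 (y20 + y11*k + y02*k^2 - q0 * (3*q0) * 1 / (k * (3*ψ30 + 2*k*ψ21 + k^2*ψ12)))) :=
    hy.sub (((hq.mul hq').mul hY1).div (hd.const_mul k) (mul_ne_zero hk hD))
  -- `Y₁(r, kr) = 1 + r² m r`, so `Y₁² - 1` contributes `r² m r (2 + r² m r)`.
  have hlim := (((hp.const_mul 2).div_const k).sub
      (((hq.pow 2).mul hr2).div_const (k ^ 2))).add (hm.mul ((hm.mul hr2).const_add 2))
  rw [two_mul_Apoly_div_eq ψ30 ψ21 ψ12 ψ03 y20 y11 y02 q0 hk hD]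
  convert hlim.congr' ?_ using 2
  · ring
  filter_upwards [hr, hd.eventually_ne hD] with r hr hdr
  have hΨr0 : Ψr r (k * r) ≠ 0 := left_ne_zero_of_mul (by simpa [div_eq_mul_inv] using hdr)
  simp only [m, u1sq]
  field_simp
  ring

theorem continuousOn_u1sq {Ψ Ψr Y : ℝ → ℝ → ℝ} {Q Q' : ℝ → ℝ} {r : ℝ} {s : Set ℝ}
    (hΨ : Continuous (Ψ r)) (hΨr : Continuous (Ψr r)) (hY : Continuous (Y r))
    (hs : ∀ R ∈ s, R ≠ 0 ∧ Ψr r R ≠ 0) : ContinuousOn (u1sq Ψ Ψr Y Q Q' r) s := by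
  intro R hR
  obtain ⟨hR0, hΨr0⟩ := hs R hR
  refine ContinuousAt.continuousWithinAt ?_
  unfold u1sq
  fun_prop (disch := simp [hR0, hΨr0])

theorem u1sq_vanishing_curve_exists_general
    (Ψ Ψr Y : ℝ → ℝ → ℝ) (Q Q' : ℝ → ℝ)
    (ψ30 ψ21 ψ12 ψ03 y20 y11 y02 q0 : ℝ)
    (hΨc : Continuous (fun q : ℝ × ℝ => Ψ q.1 q.2))
    (hΨrc : Continuous (fun q : ℝ × ℝ => Ψr q.1 q.2))
    (hYc : Continuous (fun q : ℝ × ℝ => Y q.1 q.2))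
    (hΨ : (fun q : ℝ × ℝ =>
        Ψ q.1 q.2 - (ψ30*q.1^3 + ψ21*q.1^2*q.2 + ψ12*q.1*q.2^2 + ψ03*q.2^3))
      =o[nhds ((0:ℝ), (0:ℝ))] fun q : ℝ × ℝ => (|q.1| + |q.2|)^3)
    (hΨr : (fun q : ℝ × ℝ =>
        Ψr q.1 q.2 - (3*ψ30*q.1^2 + 2*ψ21*q.1*q.2 + ψ12*q.2^2))
      =o[nhds ((0:ℝ), (0:ℝ))] fun q : ℝ × ℝ => (|q.1| + |q.2|)^2)
    (hY : (fun q : ℝ × ℝ =>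
        Y q.1 q.2 - (1 + y20*q.1^2 + y11*q.1*q.2 + y02*q.2^2))
      =o[nhds ((0:ℝ), (0:ℝ))] fun q : ℝ × ℝ => (|q.1| + |q.2|)^2)
    (hQ : (fun r : ℝ => Q r - q0 * r^3) =o[𝓝[>] (0:ℝ)] fun r : ℝ => r^3)
    (hQ' : (fun r : ℝ => Q' r - 3 * q0 * r^2) =o[𝓝[>] (0:ℝ)] fun r : ℝ => r^2)
    (k₀ : ℝ) (hk₀ : k₀ ∈ Set.Ioo (0:ℝ) 1)
    (hAk₀ : Apoly ψ30 ψ21 ψ12 ψ03 y20 y11 y02 q0 k₀ < 0)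
    (hA1 : 0 < Apoly ψ30 ψ21 ψ12 ψ03 y20 y11 y02 q0 1)
    (hD : ∀ k ∈ Set.Icc k₀ 1, 0 < 3*ψ30 + 2*k*ψ21 + k^2*ψ12)
    (hpos : ∃ δ > 0, ∀ r R : ℝ, 0 < R → R ≤ r → r < δ → 0 < Ψr r R) :
    ∃ ε > 0, ∀ r ∈ Set.Ioo (0:ℝ) ε,
      ∃ R ∈ Set.Ioo (k₀ * r) r, u1sq Ψ Ψr Y Q Q' r R = 0 := by
  obtain ⟨δ, hδ, hΨr_pos⟩ := hpos
  have hD₀ := hD k₀ ⟨le_rfl, hk₀.2.le⟩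
  have hD₁ := hD 1 ⟨hk₀.2.le, le_rfl⟩
  have hneg := (tendsto_u1sq_ray_div_sq hΨ hΨr hY hQ hQ' hk₀.1.ne' hD₀.ne').eventually_lt_const
    (div_neg_of_neg_of_pos (by linarith) (mul_pos hk₀.1 hD₀))
  have hpos := (tendsto_u1sq_ray_div_sq hΨ hΨr hY hQ hQ' one_ne_zero hD₁.ne').eventually_const_lt
    (div_pos (by linarith) (mul_pos one_pos hD₁))
  obtain ⟨ε, hε, hsub⟩ :=
    mem_nhdsGT_iff_exists_Ioo_subset.1 (hneg.and (hpos.and (Ioo_mem_nhdsGT hδ)))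
  refine ⟨ε, hε, fun r hr => ?_⟩
  obtain ⟨hr₀, hr₁, -, hrδ⟩ := hsub hr
  have hr2 : 0 < r ^ 2 := pow_pos hr.1 2
  rw [one_mul] at hr₁
  have hcont : ContinuousOn (u1sq Ψ Ψr Y Q Q' r) (Set.Icc (k₀ * r) r) :=
    continuousOn_u1sq (hΨc.comp (Continuous.prodMk_right r))
      (hΨrc.comp (Continuous.prodMk_right r)) (hYc.comp (Continuous.prodMk_right r))
      fun R hR => have hR0 : 0 < R := (mul_pos hk₀.1 hr.1).trans_le hR.1
        ⟨hR0.ne', (hΨr_pos r R hR0 hR.2 hrδ).ne'⟩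
  obtain ⟨R, hR, hR0⟩ := intermediate_value_Ioo (mul_le_of_le_one_left hr.1.le hk₀.2.le) hcont
    ⟨neg_of_div_neg_left hr₀ hr2.le, (div_pos_iff_of_pos_right hr2).1 hr₁⟩
  exact ⟨R, hR, hR0⟩

/-- When `A` changes sign on `(0,1)`, the curve where `u₁²` vanishes exists:
for small `r` there is `R ∈ (k₀r, r)` with `u₁²(r,R) = 0`. -/
theorem u1sq_vanishing_curve_exists
    (Ψ Ψr Y : ℝ → ℝ → ℝ) (Q Q' : ℝ → ℝ)
    (ψ30 ψ21 ψ12 ψ03 y20 y11 y02 q0 : ℝ)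
    (hψ30 : 0 < ψ30) (hq0 : q0 ≠ 0)
    (hΨc : Continuous (fun q : ℝ × ℝ => Ψ q.1 q.2))
    (hΨrc : Continuous (fun q : ℝ × ℝ => Ψr q.1 q.2))
    (hYc : Continuous (fun q : ℝ × ℝ => Y q.1 q.2))
    (hQc : Continuous Q) (hQ'c : Continuous Q')
    (hlink : ∀ r R, HasDerivAt (fun s => Ψ s R) (Ψr r R) r)
    (hQd : ∀ r, HasDerivAt Q (Q' r) r)
    (hΨ : (fun q : ℝ × ℝ =>
        Ψ q.1 q.2 - (ψ30*q.1^3 + ψ21*q.1^2*q.2 + ψ12*q.1*q.2^2 + ψ03*q.2^3))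
      =o[nhds ((0:ℝ), (0:ℝ))] fun q : ℝ × ℝ => (|q.1| + |q.2|)^3)
    (hΨr : (fun q : ℝ × ℝ =>
        Ψr q.1 q.2 - (3*ψ30*q.1^2 + 2*ψ21*q.1*q.2 + ψ12*q.2^2))
      =o[nhds ((0:ℝ), (0:ℝ))] fun q : ℝ × ℝ => (|q.1| + |q.2|)^2)
    (hY : (fun q : ℝ × ℝ =>
        Y q.1 q.2 - (1 + y20*q.1^2 + y11*q.1*q.2 + y02*q.2^2))
      =o[nhds ((0:ℝ), (0:ℝ))] fun q : ℝ × ℝ => (|q.1| + |q.2|)^2)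
    (hQ : (fun r : ℝ => Q r - q0 * r^3) =o[𝓝[>] (0:ℝ)] fun r : ℝ => r^3)
    (hQ' : (fun r : ℝ => Q' r - 3 * q0 * r^2) =o[𝓝[>] (0:ℝ)] fun r : ℝ => r^2)
    (k₀ : ℝ) (hk₀ : k₀ ∈ Set.Ioo (0:ℝ) 1)
    (hAk₀ : Apoly ψ30 ψ21 ψ12 ψ03 y20 y11 y02 q0 k₀ < 0)
    (hA1 : 0 < Apoly ψ30 ψ21 ψ12 ψ03 y20 y11 y02 q0 1)
    (hD : ∀ k ∈ Set.Icc k₀ 1, 0 < 3*ψ30 + 2*k*ψ21 + k^2*ψ12)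
    (hpos : ∃ δ > 0, ∀ r R : ℝ, 0 < R → R ≤ r → r < δ → 0 < Ψr r R) :
    ∃ ε > 0, ∀ r ∈ Set.Ioo (0:ℝ) ε,
      ∃ R ∈ Set.Ioo (k₀ * r) r, u1sq Ψ Ψr Y Q Q' r R = 0 :=
  u1sq_vanishing_curve_exists_general Ψ Ψr Y Q Q' ψ30 ψ21 ψ12 ψ03 y20 y11 y02 q0 hΨc hΨrc hYc hΨ hΨr
    hY hQ hQ' k₀ hk₀ hAk₀ hA1 hD hpos
end
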